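/- Let g : ℝ → ℝ be twice continuously differentiable on [a,b] with a < b, and let m₂ ≤ g''(t) ≤ M₂ on [a,b]. Then |(g(a)+g(b))/6 + (2/3)g((a+b)/2) - (1/(b-a))∫_a^b g(t) dt| ≤ (1/36)(M₂ - m₂)(b-a)². -/

import Mathlib

/-!
Simpson's rule is (trapezoid rule + 2 · midpoint rule) / 3, so its error is
`(E_T g - 2 E_M g) / (3 (b - a))`, where `E_T`, `E_M` are the trapezoid and midpoint errors.
By Hermite–Hadamard both errors are nonnegative on convex functions, hence monotone for the
order "`ψ - φ` is convex"; since `m₂ ≤ g'' ≤ M₂`, the function `g` lies between `m₂ t² / 2` and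
`M₂ t² / 2` in this order. For `c t² / 2` the errors are exactly `c (b - a)³ / 12` and
`c (b - a)³ / 24`, and `(M₂ / 12 - 2 m₂ / 24) / 3 = (M₂ - m₂) / 36` (symmetrically below).
-/

open Set intervalIntegral

noncomputable def trapezoidError (a b : ℝ) (φ : ℝ → ℝ) : ℝ :=
  (b - a) * (φ a + φ b) / 2 - ∫ t in a..b, φ t

noncomputable def midpointError (a b : ℝ) (φ : ℝ → ℝ) : ℝ :=
  (∫ t in a..b, φ t) - (b - a) * φ ((a + b) / 2)

section HermiteHadamard

variable {a b : ℝ} {φ ψ : ℝ → ℝ}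

theorem ConvexOn.trapezoidError_nonneg (hab : a ≤ b) (hconv : ConvexOn ℝ (Icc a b) φ)
    (hφ : ContinuousOn φ (Icc a b)) : 0 ≤ trapezoidError a b φ := by
  have hmaps : MapsTo (fun s => a + (b - a) * s) (Icc 0 1) (Icc a b) := by
    rintro s ⟨hs₀, hs₁⟩
    constructor <;> nlinarith
  have hchord : ∀ s ∈ Icc (0 : ℝ) 1, φ (a + (b - a) * s) ≤ φ a + s * (φ b - φ a) := by
    rintro s ⟨hs₀, hs₁⟩
    have h := hconv.2 (left_mem_Icc.2 hab) (right_mem_Icc.2 hab) (sub_nonneg.2 hs₁) hs₀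
      (sub_add_cancel 1 s)
    simp only [smul_eq_mul] at h
    rw [show a + (b - a) * s = (1 - s) * a + s * b by ring]
    linarith
  have hsub : ∫ t in a..b, φ t = (b - a) * ∫ s in (0 : ℝ)..1, φ (a + (b - a) * s) := by
    rw [← smul_eq_mul, smul_integral_comp_add_mul]
    simp
  have hint : IntervalIntegrable (fun s => φ (a + (b - a) * s)) MeasureTheory.volume 0 1 :=
    (hφ.comp (by fun_prop) hmaps).intervalIntegrable_of_Icc zero_le_one
  have hle := integral_mono_on zero_le_one hint (by simp) hchord
  have hchord_int : ∫ s in (0 : ℝ)..1, (φ a + s * (φ b - φ a)) = (φ a + φ b) / 2 := by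
    rw [integral_add intervalIntegrable_const (by simp), integral_const, integral_mul_const,
      integral_id, smul_eq_mul]
    ring
  have := mul_le_mul_of_nonneg_left (hle.trans_eq hchord_int) (sub_nonneg.2 hab)
  rw [trapezoidError, hsub]
  linarith

theorem ConvexOn.midpointError_nonneg (hab : a ≤ b) (hconv : ConvexOn ℝ (Icc a b) φ)
    (hφ : ContinuousOn φ (Icc a b)) : 0 ≤ midpointError a b φ := by
  have hmaps : MapsTo (fun t => a + b - t) (Icc a b) (Icc a b) := by
    rintro t ⟨ht₁, ht₂⟩
    constructor <;> linarith
  have hint := hφ.intervalIntegrable_of_Icc (μ := MeasureTheory.volume) hab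
  have hint_refl : IntervalIntegrable (fun t => φ (a + b - t)) MeasureTheory.volume a b :=
    (hφ.comp (by fun_prop) hmaps).intervalIntegrable_of_Icc hab
  have hrefl : ∫ t in a..b, φ (a + b - t) = ∫ t in a..b, φ t := by
    rw [integral_comp_sub_left φ (a + b)]
    norm_num
  have hmid : ∀ t ∈ Icc a b, φ ((a + b) / 2) ≤ (φ t + φ (a + b - t)) / 2 := by
    intro t ht
    have h := hconv.2 ht (hmaps ht) one_half_pos.le one_half_pos.le (add_halves 1)
    simp only [smul_eq_mul] at h
    rw [show 1 / 2 * t + 1 / 2 * (a + b - t) = (a + b) / 2 by ring] at h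
    linarith
  rw [midpointError, sub_nonneg]
  calc (b - a) * φ ((a + b) / 2) = ∫ _ in a..b, φ ((a + b) / 2) := by simp
    _ ≤ ∫ t in a..b, (φ t + φ (a + b - t)) / 2 :=
      integral_mono_on hab intervalIntegrable_const ((hint.add hint_refl).div_const 2) hmid
    _ = ∫ t in a..b, φ t := by
      rw [integral_div, integral_add hint hint_refl, hrefl]
      ring

theorem trapezoidError_le_of_convexOn_sub (hab : a ≤ b) (hφ : ContinuousOn φ (Icc a b))
    (hψ : ContinuousOn ψ (Icc a b)) (hconv : ConvexOn ℝ (Icc a b) (fun t => ψ t - φ t)) :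
    trapezoidError a b φ ≤ trapezoidError a b ψ := by
  have h := hconv.trapezoidError_nonneg hab (hψ.sub hφ)
  rw [trapezoidError, integral_sub (hψ.intervalIntegrable_of_Icc hab)
    (hφ.intervalIntegrable_of_Icc hab)] at h
  rw [trapezoidError, trapezoidError]
  linarith

theorem midpointError_le_of_convexOn_sub (hab : a ≤ b) (hφ : ContinuousOn φ (Icc a b))
    (hψ : ContinuousOn ψ (Icc a b)) (hconv : ConvexOn ℝ (Icc a b) (fun t => ψ t - φ t)) :
    midpointError a b φ ≤ midpointError a b ψ := by
  have h := hconv.midpointError_nonneg hab (hψ.sub hφ)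
  rw [midpointError, integral_sub (hψ.intervalIntegrable_of_Icc hab)
    (hφ.intervalIntegrable_of_Icc hab)] at h
  rw [midpointError, midpointError]
  linarith

end HermiteHadamard

theorem trapezoidError_mul_sq_div_two (a b c : ℝ) :
    trapezoidError a b (fun t => c * t ^ 2 / 2) = c * (b - a) ^ 3 / 12 := by
  simp only [trapezoidError, integral_div, integral_const_mul, integral_pow, Nat.reduceAdd,
    Nat.cast_ofNat]
  ring

theorem midpointError_mul_sq_div_two (a b c : ℝ) :
    midpointError a b (fun t => c * t ^ 2 / 2) = c * (b - a) ^ 3 / 24 := by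
  simp only [midpointError, integral_div, integral_const_mul, integral_pow, Nat.reduceAdd,
    Nat.cast_ofNat]
  ring

theorem simpson_sub_average_eq {a b : ℝ} (hab : a < b) (φ : ℝ → ℝ) :
    (φ a + φ b) / 6 + 2 / 3 * φ ((a + b) / 2) - (1 / (b - a)) * ∫ t in a..b, φ t =
      (trapezoidError a b φ / 3 - 2 / 3 * midpointError a b φ) / (b - a) := by
  have : b - a ≠ 0 := (sub_pos.2 hab).ne'
  rw [trapezoidError, midpointError]
  field_simp
  ring

theorem convexOn_sub_mul_sq_of_le_deriv2 {D : Set ℝ} (hD : Convex ℝ D) {m : ℝ}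
    {g g' g'' : ℝ → ℝ} (hg' : ∀ x ∈ D, HasDerivWithinAt g (g' x) D x)
    (hg'' : ∀ x ∈ D, HasDerivWithinAt g' (g'' x) D x) (hm : ∀ x ∈ D, m ≤ g'' x) :
    ConvexOn ℝ D (fun t => g t - m * t ^ 2 / 2) := by
  have hq' (x : ℝ) : HasDerivAt (fun t => m * t ^ 2 / 2) (m * x) x :=
    (((hasDerivAt_pow 2 x).const_mul m).div_const 2).congr_deriv (by norm_num; ring)
  refine convexOn_of_hasDerivWithinAt2_nonneg hD (f' := fun t => g' t - m * t)
    (f'' := fun t => g'' t - m) ?_ ?_ ?_ ?_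
  · exact fun x hx => (hg' x hx).continuousWithinAt.sub (hq' x).continuousAt.continuousWithinAt
  · exact fun x hx => ((hg' x (interior_subset hx)).mono interior_subset).sub
      (hq' x).hasDerivWithinAt
  · exact fun x hx => ((hg'' x (interior_subset hx)).mono interior_subset).sub
      (hasDerivAt_const_mul m).hasDerivWithinAt
  · exact fun x hx => sub_nonneg.2 (hm x (interior_subset hx))

theorem convexOn_mul_sq_sub_of_deriv2_le {D : Set ℝ} (hD : Convex ℝ D) {M : ℝ}
    {g g' g'' : ℝ → ℝ} (hg' : ∀ x ∈ D, HasDerivWithinAt g (g' x) D x)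
    (hg'' : ∀ x ∈ D, HasDerivWithinAt g' (g'' x) D x) (hM : ∀ x ∈ D, g'' x ≤ M) :
    ConvexOn ℝ D (fun t => M * t ^ 2 / 2 - g t) := by
  convert convexOn_sub_mul_sq_of_le_deriv2 hD (m := -M) (fun x hx => (hg' x hx).neg)
    (fun x hx => (hg'' x hx).neg) (fun x hx => neg_le_neg (hM x hx)) using 2 with t
  rw [Pi.neg_apply]
  ring

theorem simpson_stmt2 (a b m₂ M₂ : ℝ) (hab : a < b) (g g' g'' : ℝ → ℝ)
    (hg' : ∀ x ∈ Set.Icc a b, HasDerivWithinAt g (g' x) (Set.Icc a b) x)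
    (hg'' : ∀ x ∈ Set.Icc a b, HasDerivWithinAt g' (g'' x) (Set.Icc a b) x)
    (hm : ∀ x ∈ Set.Icc a b, m₂ ≤ g'' x) (hM : ∀ x ∈ Set.Icc a b, g'' x ≤ M₂) :
    |(g a + g b) / 6 + 2 / 3 * g ((a + b) / 2) - (1 / (b - a)) * ∫ t in a..b, g t| ≤
      1 / 36 * (M₂ - m₂) * (b - a) ^ 2 := by
  have hgc : ContinuousOn g (Icc a b) := fun x hx => (hg' x hx).continuousWithinAt
  have hq (c : ℝ) : ContinuousOn (fun t : ℝ => c * t ^ 2 / 2) (Icc a b) := by fun_prop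
  have hlow := convexOn_sub_mul_sq_of_le_deriv2 (convex_Icc a b) hg' hg'' hm
  have hupp := convexOn_mul_sq_sub_of_deriv2_le (convex_Icc a b) hg' hg'' hM
  have hT₁ := trapezoidError_le_of_convexOn_sub hab.le (hq m₂) hgc hlow
  have hT₂ := trapezoidError_le_of_convexOn_sub hab.le hgc (hq M₂) hupp
  have hM₁ := midpointError_le_of_convexOn_sub hab.le (hq m₂) hgc hlow
  have hM₂ := midpointError_le_of_convexOn_sub hab.le hgc (hq M₂) hupp
  rw [trapezoidError_mul_sq_div_two] at hT₁ hT₂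
  rw [midpointError_mul_sq_div_two] at hM₁ hM₂
  have hba := sub_pos.2 hab
  rw [simpson_sub_average_eq hab, abs_div, abs_of_pos hba, div_le_iff₀ hba, abs_le]
  constructor <;> linarith
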